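/- Lemma 2 (ℓ1 norm of the screened marginal μ^sc, explicit form): ‖μ^sc‖₁ ≤ κ·Σ_{i∈I} μ_i + (n − n_b)·( m_b·(max_{j∈J} ν_j)/(n κ K_min) + (m − m_b)·ε² ), where ‖·‖₁ is the ℓ1 norm. -/

import Mathlib

open scoped Classical

/-!
On the active rows and columns the screened minimizer is an interior point in that coordinate, so the
first-order conditions of `Ψ_κ` hold there: the rows of `B(u^sc, v^sc)` indexed by `I` sum to `κ μ_i`
and the columns indexed by `J` sum to `ν_j / κ`. A screened row `i ∉ I` has `e^{u_i} = ε/κ`. Its entries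
in a screened column are `(ε/κ) K_{ij} εκ ≤ ε²`; in an active column `j`, every row contributes at least
`(ε/κ) K_min e^{v_j}` to the column sum `ν_j / κ`, which bounds `e^{v_j}` and hence the entry by
`ν_j / (n κ K_min)`.
-/

open Real Finset Function

variable {ι ι' : Type*}

theorem mul_exp_eq_of_isLocalMin {a b x : ℝ} (h : IsLocalMin (fun t => a * exp t - b * t) x) :
    a * exp x = b := by
  have hd : HasDerivAt (fun t => a * exp t - b * t) (a * exp x - b) x := by
    have h := ((hasDerivAt_exp x).const_mul a).sub ((hasDerivAt_id' x).const_mul b)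
    rwa [mul_one] at h
  linarith [h.hasDerivAt_eq_zero hd]

theorem isLocalMin_update_of_forall_le [DecidableEq ι] {f : (ι → ℝ) → ℝ} {u : ι → ℝ} {i : ι}
    {c : ℝ} (hc : c < exp (u i)) (hmin : ∀ t, c ≤ exp t → f u ≤ f (update u i t)) :
    IsLocalMin (fun t => f (update u i t)) (u i) := by
  refine IsMinOn.isLocalMin (s := {t | c < exp t}) (fun t ht => ?_)
    ((isOpen_lt continuous_const continuous_exp).mem_nhds hc)
  simpa using hmin t (le_of_lt ht)

theorem update_mem_screened [DecidableEq ι] {I : Finset ι} {u : ι → ℝ} {c t : ℝ} {i : ι}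
    (hi : i ∈ I) (ht : c ≤ exp t) (hu : ∀ k, c ≤ exp (u k)) (hout : ∀ k ∉ I, u k = log c) :
    (∀ k, c ≤ exp (update u i t k)) ∧ ∀ k ∉ I, update u i t k = log c :=
  ⟨(forall_update_iff u (p := fun _ y => c ≤ exp y)).2 ⟨ht, fun k _ => hu k⟩,
    fun k hk => (update_of_ne (ne_of_mem_of_not_mem hi hk).symm _ _).trans (hout k hk)⟩

variable [Fintype ι]

theorem sum_apply_update_eq [DecidableEq ι] (φ : ι → ℝ → ℝ) (u : ι → ℝ) (i : ι) (t : ℝ) :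
    ∑ k, φ k (update u i t k) = φ i t + ∑ k ∈ univ \ {i}, φ k (u k) := by
  simp only [apply_update φ u i t]
  exact sum_update_of_mem (mem_univ i) _ _

theorem mul_exp_eq_of_isLocalMin_update [DecidableEq ι] {a b u : ι → ℝ} {i : ι}
    (h : IsLocalMin (fun t => ∑ k, (a k * exp (update u i t k) - b k * update u i t k)) (u i)) :
    a i * exp (u i) = b i := by
  apply mul_exp_eq_of_isLocalMin
  simp only [sum_apply_update_eq (fun k x => a k * exp x - b k * x)] at h
  exact h.mono fun _ ht => by simp only at ht; linarith

theorem sum_le_sum_add_card_compl_mul (s : Finset ι) {f g : ι → ℝ} {b : ℝ}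
    (hs : ∀ i ∈ s, f i ≤ g i) (hsc : ∀ i ∉ s, f i ≤ b) :
    ∑ i, f i ≤ ∑ i ∈ s, g i + (Fintype.card ι - #s) * b := by
  have hcompl := sum_le_card_nsmul sᶜ f b fun i hi => hsc i (mem_compl.1 hi)
  rw [card_compl, nsmul_eq_mul, Nat.cast_sub (card_le_univ s)] at hcompl
  rw [← sum_add_sum_compl s]
  linarith [sum_le_sum hs]

section dualObjective

variable [Fintype ι']

/-- The dual objective `Ψ_κ(u, v)` with marginals `μ`, `ν`. -/
noncomputable def dualObjective (K : ι → ι' → ℝ) (μ : ι → ℝ) (ν : ι' → ℝ) (κ : ℝ)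
    (u : ι → ℝ) (v : ι' → ℝ) : ℝ :=
  (∑ i, ∑ j, exp (u i) * K i j * exp (v j)) - κ * (∑ i, u i * μ i) - (1 / κ) * (∑ j, v j * ν j)

variable {K : ι → ι' → ℝ} {μ : ι → ℝ} {ν : ι' → ℝ} {κ : ℝ} {u : ι → ℝ} {v : ι' → ℝ}

theorem dualObjective_eq_sum :
    dualObjective K μ ν κ u v =
      ∑ i, ((∑ j, K i j * exp (v j)) * exp (u i) - κ * μ i * u i) - 1 / κ * ∑ j, v j * ν j := by
  simp only [dualObjective, sum_sub_distrib, mul_sum, sum_mul]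
  congr 2
  · exact sum_congr rfl fun i _ => sum_congr rfl fun j _ => by ring
  · exact sum_congr rfl fun i _ => by ring

theorem dualObjective_swap :
    dualObjective K μ ν κ u v = dualObjective (fun j i => K i j) ν μ (1 / κ) v u := by
  have hB : ∑ i, ∑ j, exp (u i) * K i j * exp (v j) = ∑ j, ∑ i, exp (v j) * K i j * exp (u i) := by
    rw [sum_comm]
    exact sum_congr rfl fun _ _ => sum_congr rfl fun _ _ => by ring
  rw [dualObjective, dualObjective, hB, one_div_one_div]
  ring

theorem rowSum_eq_of_isLocalMin [DecidableEq ι] {i : ι}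
    (h : IsLocalMin (fun t => dualObjective K μ ν κ (update u i t) v) (u i)) :
    ∑ j, exp (u i) * K i j * exp (v j) = κ * μ i := by
  simp only [dualObjective_eq_sum] at h
  have h' := mul_exp_eq_of_isLocalMin_update (a := fun k => ∑ j, K k j * exp (v j))
    (b := fun k => κ * μ k) (h.mono fun _ ht => by simp only at ht; linarith)
  rw [← h', sum_mul]
  exact sum_congr rfl fun j _ => by ring

theorem colSum_eq_of_isLocalMin [DecidableEq ι'] {j : ι'}
    (h : IsLocalMin (fun t => dualObjective K μ ν κ u (update v j t)) (v j)) :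
    ∑ i, exp (u i) * K i j * exp (v j) = ν j / κ := by
  simp only [dualObjective_swap (K := K)] at h
  rw [div_eq_inv_mul, ← one_div, ← rowSum_eq_of_isLocalMin h]
  exact sum_congr rfl fun i _ => by ring

end dualObjective

section kernel

variable {K : ι → ι' → ℝ} {u : ι → ℝ} {v : ι' → ℝ} {a Kmin : ℝ}

theorem card_mul_le_colSum (hu : ∀ k, a ≤ exp (u k)) (hKmin : 0 ≤ Kmin) {j : ι'}
    (hK : ∀ k, Kmin ≤ K k j) :
    Fintype.card ι * (a * Kmin * exp (v j)) ≤ ∑ k, exp (u k) * K k j * exp (v j) := by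
  rw [← nsmul_eq_mul, ← card_univ]
  exact card_nsmul_le_sum _ _ _ fun k _ =>
    mul_le_mul_of_nonneg_right (mul_le_mul (hu k) (hK k) hKmin (exp_pos _).le) (exp_pos _).le

theorem exp_mul_le_colSum_div (ha : 0 < a) (hKmin : 0 < Kmin) (hu : ∀ k, a ≤ exp (u k))
    {i : ι} (hui : exp (u i) = a) {j : ι'} (hK : ∀ k, Kmin ≤ K k j) (hK1 : K i j ≤ 1) :
    exp (u i) * K i j * exp (v j) ≤ (∑ k, exp (u k) * K k j * exp (v j)) / (Fintype.card ι * Kmin) := by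
  have hcard : (0 : ℝ) < Fintype.card ι := Nat.cast_pos.2 (Fintype.card_pos_iff.2 ⟨i⟩)
  rw [le_div_iff₀ (by positivity)]
  calc exp (u i) * K i j * exp (v j) * (Fintype.card ι * Kmin)
      ≤ a * exp (v j) * (Fintype.card ι * Kmin) := by
        rw [hui]; gcongr; exact mul_le_of_le_one_right ha.le hK1
    _ = Fintype.card ι * (a * Kmin * exp (v j)) := by ring
    _ ≤ _ := card_mul_le_colSum hu hKmin.le hK

theorem rowSum_le_of_exp_eq [Fintype ι'] {J : Finset ι'} {ν : ι' → ℝ} {κ νmax b : ℝ}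
    (ha : 0 < a) (hκ : 0 < κ) (hKmin : 0 < Kmin) (hKmin_le : ∀ i j, Kmin ≤ K i j)
    (hK1 : ∀ i j, K i j ≤ 1) (hu : ∀ k, a ≤ exp (u k)) {i : ι} (hui : exp (u i) = a)
    (hcol : ∀ j ∈ J, ∑ k, exp (u k) * K k j * exp (v j) = ν j / κ) (hν : ∀ j ∈ J, ν j ≤ νmax)
    (hvout : ∀ j ∉ J, exp (v j) = b) :
    ∑ j, exp (u i) * K i j * exp (v j) ≤
      #J * νmax / (Fintype.card ι * κ * Kmin) + (Fintype.card ι' - #J) * (a * b) := by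
  refine (sum_le_sum_add_card_compl_mul J (g := fun _ => νmax / (Fintype.card ι * κ * Kmin))
    (fun j hj => ?_) fun j hj => ?_).trans_eq (by rw [sum_const, nsmul_eq_mul, mul_div_assoc])
  · calc exp (u i) * K i j * exp (v j) ≤ ν j / κ / (Fintype.card ι * Kmin) := by
          rw [← hcol j hj]; exact exp_mul_le_colSum_div ha hKmin hu hui (hKmin_le · j) (hK1 i j)
      _ = ν j / (Fintype.card ι * κ * Kmin) := by ring
      _ ≤ νmax / (Fintype.card ι * κ * Kmin) := by gcongr; exact hν j hj
  · calc exp (u i) * K i j * exp (v j) ≤ a * exp (v j) := by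
          rw [hui]; gcongr; exact mul_le_of_le_one_right ha.le (hK1 i j)
      _ = a * b := by rw [hvout j hj]

end kernel

theorem l1_norm_screened_marginal_mu_general
    (n m : ℕ)
    (C : Fin n → Fin m → ℝ) (hC : ∀ i j, 0 ≤ C i j)
    (η : ℝ) (hη : 0 < η)
    (K : Fin n → Fin m → ℝ) (hK : ∀ i j, K i j = Real.exp (-(C i j) / η))
    (μ : Fin n → ℝ) (ν : Fin m → ℝ)
    (ε κ : ℝ) (hε : 0 < ε) (hκ : 0 < κ)
    (I : Finset (Fin n))
    (J : Finset (Fin m))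
    (Kmin : ℝ) (hKmin_le : ∀ i j, Kmin ≤ K i j) (hKmin_mem : ∃ i j, K i j = Kmin)
    (usc : Fin n → ℝ) (vsc : Fin m → ℝ)
    (husc_feas : ∀ i, ε / κ ≤ Real.exp (usc i))
    (hvsc_feas : ∀ j, ε * κ ≤ Real.exp (vsc j))
    (husc_out : ∀ i ∉ I, usc i = Real.log (ε / κ))
    (hvsc_out : ∀ j ∉ J, vsc j = Real.log (ε * κ))
    (hsc_min : ∀ (u : Fin n → ℝ) (v : Fin m → ℝ),
      (∀ i, ε / κ ≤ Real.exp (u i)) → (∀ j, ε * κ ≤ Real.exp (v j)) →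
      (∀ i ∉ I, u i = Real.log (ε / κ)) → (∀ j ∉ J, v j = Real.log (ε * κ)) →
      (∑ i, ∑ j, Real.exp (usc i) * K i j * Real.exp (vsc j))
          - κ * (∑ i, usc i * μ i) - (1 / κ) * (∑ j, vsc j * ν j)
        ≤ (∑ i, ∑ j, Real.exp (u i) * K i j * Real.exp (v j))
          - κ * (∑ i, u i * μ i) - (1 / κ) * (∑ j, v j * ν j))
    (hactive_u : ∀ i ∈ I, ε / κ < Real.exp (usc i))
    (hactive_v : ∀ j ∈ J, ε * κ < Real.exp (vsc j))
    (μsc : Fin n → ℝ)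
    (hμsc : ∀ i, μsc i = ∑ j, Real.exp (usc i) * K i j * Real.exp (vsc j))
    (νmaxJ : ℝ)
    (hνmaxJ : (∃ j ∈ J, ν j = νmaxJ) ∧ ∀ j ∈ J, ν j ≤ νmaxJ) :
    ∑ i, |μsc i| ≤
      κ * (∑ i ∈ I, μ i) +
        ((n : ℝ) - I.card) *
          ((J.card : ℝ) * νmaxJ / ((n : ℝ) * κ * Kmin) + ((m : ℝ) - J.card) * ε ^ 2) := by
  have hεκ : 0 < ε / κ := div_pos hε hκ
  have hKpos : ∀ i j, 0 < K i j := fun i j => hK i j ▸ exp_pos _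
  have hK1 : ∀ i j, K i j ≤ 1 := fun i j => by
    rw [hK, exp_le_one_iff]; exact div_nonpos_of_nonpos_of_nonneg (neg_nonpos.2 (hC i j)) hη.le
  have hKmin : 0 < Kmin := by obtain ⟨i, j, rfl⟩ := hKmin_mem; exact hKpos i j
  have hrow : ∀ i ∈ I, μsc i = κ * μ i := fun i hi => by
    rw [hμsc]
    refine rowSum_eq_of_isLocalMin (isLocalMin_update_of_forall_le
      (f := fun w => dualObjective K μ ν κ w vsc) (hactive_u i hi) fun t ht => ?_)
    obtain ⟨hfeas, hout⟩ := update_mem_screened hi ht husc_feas husc_out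
    exact hsc_min _ _ hfeas hvsc_feas hout hvsc_out
  have hcol : ∀ j ∈ J, ∑ i, exp (usc i) * K i j * exp (vsc j) = ν j / κ := fun j hj => by
    refine colSum_eq_of_isLocalMin (isLocalMin_update_of_forall_le
      (f := fun w => dualObjective K μ ν κ usc w) (hactive_v j hj) fun t ht => ?_)
    obtain ⟨hfeas, hout⟩ := update_mem_screened hj ht hvsc_feas hvsc_out
    exact hsc_min _ _ husc_feas hfeas husc_out hout
  have hμsc_nonneg : ∀ i, 0 ≤ μsc i := fun i => by
    rw [hμsc]; exact sum_nonneg fun j _ => by have := hKpos i j; positivity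
  have hscreened : ∀ i ∉ I, μsc i ≤
      J.card * νmaxJ / (n * κ * Kmin) + (m - J.card) * ε ^ 2 := fun i hi => by
    have h := rowSum_le_of_exp_eq hεκ hκ hKmin hKmin_le hK1 husc_feas
      (by rw [husc_out i hi, exp_log hεκ]) hcol hνmaxJ.2
      fun j hj => by rw [hvsc_out j hj, exp_log (mul_pos hε hκ)]
    have hab : ε / κ * (ε * κ) = ε ^ 2 := by field_simp
    rwa [Fintype.card_fin, Fintype.card_fin, hab, ← hμsc] at h
  have h := sum_le_sum_add_card_compl_mul I (f := fun i => |μsc i|)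
    (fun i hi => (abs_of_nonneg (hμsc_nonneg i)).trans_le (hrow i hi).le)
    fun i hi => (abs_of_nonneg (hμsc_nonneg i)).trans_le (hscreened i hi)
  simpa [mul_sum] using h

theorem l1_norm_screened_marginal_mu
    (n m : ℕ) (hn : 0 < n) (hm : 0 < m)
    (C : Fin n → Fin m → ℝ) (hC : ∀ i j, 0 ≤ C i j)
    (η : ℝ) (hη : 0 < η)
    (K : Fin n → Fin m → ℝ) (hK : ∀ i j, K i j = Real.exp (-(C i j) / η))
    (μ : Fin n → ℝ) (ν : Fin m → ℝ)
    (hμpos : ∀ i, 0 < μ i) (hνpos : ∀ j, 0 < ν j)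
    (hμsum : ∑ i, μ i = 1) (hνsum : ∑ j, ν j = 1)
    (ε κ : ℝ) (hε : 0 < ε) (hκ : 0 < κ)
    (I : Finset (Fin n)) (hI : ∀ i, i ∈ I ↔ ε ^ 2 / κ * (∑ j, K i j) ≤ μ i)
    (J : Finset (Fin m)) (hJ : ∀ j, j ∈ J ↔ κ * ε ^ 2 * (∑ i, K i j) ≤ ν j)
    (hIne : I.Nonempty) (hJne : J.Nonempty)
    (Kmin : ℝ) (hKmin_le : ∀ i j, Kmin ≤ K i j) (hKmin_mem : ∃ i j, K i j = Kmin)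
    (usc : Fin n → ℝ) (vsc : Fin m → ℝ)
    (husc_feas : ∀ i, ε / κ ≤ Real.exp (usc i))
    (hvsc_feas : ∀ j, ε * κ ≤ Real.exp (vsc j))
    (husc_out : ∀ i ∉ I, usc i = Real.log (ε / κ))
    (hvsc_out : ∀ j ∉ J, vsc j = Real.log (ε * κ))
    (hsc_min : ∀ (u : Fin n → ℝ) (v : Fin m → ℝ),
      (∀ i, ε / κ ≤ Real.exp (u i)) → (∀ j, ε * κ ≤ Real.exp (v j)) →
      (∀ i ∉ I, u i = Real.log (ε / κ)) → (∀ j ∉ J, v j = Real.log (ε * κ)) →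
      (∑ i, ∑ j, Real.exp (usc i) * K i j * Real.exp (vsc j))
          - κ * (∑ i, usc i * μ i) - (1 / κ) * (∑ j, vsc j * ν j)
        ≤ (∑ i, ∑ j, Real.exp (u i) * K i j * Real.exp (v j))
          - κ * (∑ i, u i * μ i) - (1 / κ) * (∑ j, v j * ν j))
    (hactive_u : ∀ i ∈ I, ε / κ < Real.exp (usc i))
    (hactive_v : ∀ j ∈ J, ε * κ < Real.exp (vsc j))
    (μsc : Fin n → ℝ)
    (hμsc : ∀ i, μsc i = ∑ j, Real.exp (usc i) * K i j * Real.exp (vsc j))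
    (νmaxJ : ℝ)
    (hνmaxJ : (∃ j ∈ J, ν j = νmaxJ) ∧ ∀ j ∈ J, ν j ≤ νmaxJ) :
    ∑ i, |μsc i| ≤
      κ * (∑ i ∈ I, μ i) +
        ((n : ℝ) - I.card) *
          ((J.card : ℝ) * νmaxJ / ((n : ℝ) * κ * Kmin) + ((m : ℝ) - J.card) * ε ^ 2) :=
  l1_norm_screened_marginal_mu_general n m C hC η hη K hK μ ν ε κ hε hκ I J Kmin hKmin_le hKmin_mem
    usc vsc husc_feas hvsc_feas husc_out hvsc_out hsc_min hactive_u hactive_v μsc hμsc νmaxJ hνmaxJ
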